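/- For 1 ≤ n ≤ r put w_n^+ = u_{−n} + p·u_n and w_n^− = u_{−n} − p^{−1}·u_n, and also w_0^+ = u_0. Then for all i ∈ {1/2, 3/2, …, r−1/2} and 1 ≤ n ≤ r: f_{1/2}(u_0) = u_{−1} + p·u_1; f_i(w_n^+) = δ_{i,n+1/2}·(u_{−n−1} + p·u_{n+1}); e_i(w_n^+) = δ_{i,n−1/2}·(p^{−δ_{i,1/2}}·u_{−n+1} + p·u_{n−1}); f_i(w_n^−) = δ_{i,n+1/2}·(u_{−n−1} − p^{−1}·u_{n+1}); e_i(w_n^−) = δ_{i,n−1/2}·(p^{−δ_{i,1/2}}·u_{−n+1} − p^{−1}·u_{n−1}). Consequently V^+ = span( {u_0} ∪ {w_n^+} ) and V^− = span{w_n^−} are each invariant under all of the operators e_i, f_i, k_i, k_i^{−1}, and V = V^+ ⊕ V^− as modules for the algebra generated by these operators. -/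

import Mathlib

/-!
The generators act on basis vectors by shifting the label one step towards or away from `0`,
and the two halves of `e_i = E_i + F_{-i} K_i⁻¹` (resp. `f_i`) act mirror-symmetrically on `u_a`
and `u_{-a}`; the `K`-factors are trivial on every vector they meet. Hence `e_i`, `f_i` send
`u_{-n} + c u_n` to `u_{-n∓1} + c u_{n∓1}` with the same `c`, except that at `n = 1` the
coefficient `p⁻¹` of `e_{1/2}` produces `(p⁻¹ + c) u_0`, which vanishes exactly for
`c = -p⁻¹`; and the `k_i` are diagonal with the same eigenvalue on `u_n` and `u_{-n}`.
Coordinates of `V⁺` satisfy `x_n = p x_{-n}` and those of `V⁻` satisfy `x_n = -p⁻¹ x_{-n}`,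
`x_0 = 0`; since `p + p⁻¹ ≠ 0` this forces `V⁺ ∩ V⁻ = 0`, and
`u_n = (p + p⁻¹)⁻¹ (w_n⁺ - w_n⁻)` gives `V⁺ + V⁻ = V`.
-/

open scoped BigOperators

attribute [local instance] Classical.propDecidable

noncomputable section

/-- The field `ℚ(p,q)` of rational functions in two indeterminates over `ℚ`. -/
abbrev K2 : Type := FractionRing (MvPolynomial (Fin 2) ℚ)

/-- The indeterminate `p`. -/
noncomputable def pp : K2 := algebraMap (MvPolynomial (Fin 2) ℚ) K2 (MvPolynomial.X 0)

/-- The indeterminate `q`. -/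
noncomputable def qq : K2 := algebraMap (MvPolynomial (Fin 2) ℚ) K2 (MvPolynomial.X 1)

/-- The index set `I = {-r, -r+1, ..., r}` of integers, as a subtype of `ℚ`. -/
def IIdx (r : ℕ) : Type := {a : ℚ // ∃ k : ℤ, -(r : ℤ) ≤ k ∧ k ≤ r ∧ a = (k : ℚ)}

instance (r : ℕ) : DecidableEq (IIdx r) := fun a b =>
  decidable_of_iff (a.1 = b.1) Subtype.ext_iff.symm

/-- Negation on the index set. -/
def IIdx.neg {r : ℕ} (a : IIdx r) : IIdx r :=
  ⟨-a.1, by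
    obtain ⟨k, h1, h2, h3⟩ := a.2
    exact ⟨-k, by omega, by omega, by rw [h3]; push_cast; ring⟩⟩

/-- Interpret a rational number as an element of the index set (junk value if out of range). -/
def toII (r : ℕ) (a : ℚ) : IIdx r :=
  if h : ∃ k : ℤ, -(r : ℤ) ≤ k ∧ k ≤ r ∧ a = (k : ℚ) then ⟨a, h⟩
  else ⟨0, ⟨0, by omega, by omega, by norm_num⟩⟩

/-- The natural representation `V`, the free `K2`-module on the index set `I`. -/
abbrev V1 (r : ℕ) : Type := IIdx r →₀ K2

/-- The basis vector `u_a` of `V`. -/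
noncomputable def uv {r : ℕ} (a : IIdx r) : V1 r := Finsupp.single a 1

/-- `u_a` for a rational label. -/
noncomputable def uvq (r : ℕ) (a : ℚ) : V1 r := uv (toII r a)

/-- The set of indices `{1/2, 3/2, …, r-1/2}` of the coideal generators. -/
def Ijset (r : ℕ) : Set ℚ := {i | ∃ k : ℕ, k + 1 ≤ r ∧ i = (k : ℚ) + 1/2}

/-- `K_i`-weight of the basis vector `u_a`: `K_i u_a = q ^ kexp i a • u_a`. -/
def kexp (i a : ℚ) : ℤ :=
  (if a = i - 1/2 then 1 else 0) - (if a = i + 1/2 then 1 else 0)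

/-- The operator `E_i` on `V`: `E_i u_a = δ_{a, i+1/2} u_{i-1/2}`. -/
noncomputable def E1 (r : ℕ) (i : ℚ) : Module.End K2 (V1 r) :=
  Finsupp.lift (V1 r) K2 (IIdx r) (fun a => if a.1 = i + 1/2 then uvq r (i - 1/2) else 0)

/-- The operator `F_i` on `V`: `F_i u_a = δ_{a, i-1/2} u_{i+1/2}`. -/
noncomputable def F1 (r : ℕ) (i : ℚ) : Module.End K2 (V1 r) :=
  Finsupp.lift (V1 r) K2 (IIdx r) (fun a => if a.1 = i - 1/2 then uvq r (i + 1/2) else 0)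

/-- The operator `K_i` on `V`. -/
noncomputable def K1 (r : ℕ) (i : ℚ) : Module.End K2 (V1 r) :=
  Finsupp.lift (V1 r) K2 (IIdx r) (fun a => (qq ^ kexp i a.1 : K2) • uv a)

/-- The operator `K_i⁻¹` on `V`. -/
noncomputable def K1inv (r : ℕ) (i : ℚ) : Module.End K2 (V1 r) :=
  Finsupp.lift (V1 r) K2 (IIdx r) (fun a => (qq ^ (-(kexp i a.1)) : K2) • uv a)

/-- The coideal operator `e_i` on `V`: `e_i = E_i + F_{-i} K_i⁻¹` for `i ≠ 1/2`, and
`e_{1/2} = E_{1/2} + p⁻¹ F_{-1/2} K_{1/2}⁻¹`. -/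
noncomputable def e1 (r : ℕ) (i : ℚ) : Module.End K2 (V1 r) :=
  E1 r i + (pp ^ (-(if i = 1/2 then (1:ℤ) else 0))) • (F1 r (-i) * K1inv r i)

/-- The coideal operator `f_i` on `V`: `f_i = E_{-i} + K_{-i}⁻¹ F_i` for `i ≠ 1/2`, and
`f_{1/2} = E_{-1/2} + p K_{-1/2}⁻¹ F_{1/2}`. -/
noncomputable def f1 (r : ℕ) (i : ℚ) : Module.End K2 (V1 r) :=
  E1 r (-i) + (pp ^ (if i = 1/2 then (1:ℤ) else 0)) • (K1inv r (-i) * F1 r i)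

/-- The coideal operator `k_i = K_i K_{-i}⁻¹` on `V`. -/
noncomputable def k1 (r : ℕ) (i : ℚ) : Module.End K2 (V1 r) :=
  K1 r i * K1inv r (-i)

/-- The inverse `k_i⁻¹ = K_i⁻¹ K_{-i}` on `V`. -/
noncomputable def k1inv (r : ℕ) (i : ℚ) : Module.End K2 (V1 r) :=
  K1inv r i * K1 r (-i)

/-- `w_n⁺ = u_{-n} + p u_n`. -/
noncomputable def wplus (r : ℕ) (n : ℕ) : V1 r := uvq r (-(n : ℚ)) + pp • uvq r (n : ℚ)

/-- `w_n⁻ = u_{-n} - p⁻¹ u_n`. -/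
noncomputable def wminus (r : ℕ) (n : ℕ) : V1 r := uvq r (-(n : ℚ)) - pp⁻¹ • uvq r (n : ℚ)

/-- `V⁺ = span ({u_0} ∪ {w_n⁺})` and `V⁻ = span {w_n⁻}`. -/
noncomputable def VplusO (r : ℕ) : Submodule K2 (V1 r) :=
  Submodule.span K2 ({uvq r 0} ∪ {x | ∃ n : ℕ, 1 ≤ n ∧ n ≤ r ∧ x = wplus r n})

noncomputable def VminusO (r : ℕ) : Submodule K2 (V1 r) :=
  Submodule.span K2 {x | ∃ n : ℕ, 1 ≤ n ∧ n ≤ r ∧ x = wminus r n}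

section Basis

variable {r : ℕ}

lemma toII_val_intCast {k : ℤ} (h1 : -(r : ℤ) ≤ k) (h2 : k ≤ r) : (toII r k).1 = k := by
  have h : toII r k = ⟨k, k, h1, h2, rfl⟩ := dif_pos _
  rw [h]

lemma toII_intCast_inj {j k : ℤ} (hj1 : -(r : ℤ) ≤ j) (hj2 : j ≤ r) (hk1 : -(r : ℤ) ≤ k)
    (hk2 : k ≤ r) : toII r j = toII r k ↔ j = k := by
  refine ⟨fun h => ?_, fun h => h ▸ rfl⟩
  have := congrArg Subtype.val h
  rwa [toII_val_intCast hj1 hj2, toII_val_intCast hk1 hk2, Int.cast_inj] at this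

lemma uvq_intCast_apply {j k : ℤ} (hj1 : -(r : ℤ) ≤ j) (hj2 : j ≤ r)
    (hk1 : -(r : ℤ) ≤ k) (hk2 : k ≤ r) : uvq r j (toII r k) = if j = k then 1 else 0 := by
  rw [uvq, uv, Finsupp.single_apply]
  exact if_congr (toII_intCast_inj hj1 hj2 hk1 hk2) rfl rfl

lemma exists_eq_toII (a : IIdx r) : ∃ k : ℤ, -(r : ℤ) ≤ k ∧ k ≤ r ∧ a = toII r k := by
  obtain ⟨k, h1, h2, h3⟩ := a.2
  exact ⟨k, h1, h2, Subtype.ext (by rw [toII_val_intCast h1 h2, h3])⟩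

lemma IIdx.eq_zero_or_eq_pm (a : IIdx r) :
    a = toII r 0 ∨ ∃ n : ℕ, 1 ≤ n ∧ n ≤ r ∧ (a = toII r n ∨ a = toII r (-n)) := by
  obtain ⟨k, h1, h2, rfl⟩ := exists_eq_toII a
  rcases lt_trichotomy k 0 with hk | rfl | hk
  · refine Or.inr ⟨k.natAbs, by omega, by omega, Or.inr ?_⟩
    rw [Nat.cast_natAbs, abs_of_neg hk]
    simp
  · simp
  · refine Or.inr ⟨k.natAbs, by omega, by omega, Or.inl ?_⟩
    rw [Nat.cast_natAbs, abs_of_pos hk]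

lemma lift_uvq (f : IIdx r → V1 r) (a : ℚ) :
    Finsupp.lift (V1 r) K2 (IIdx r) f (uvq r a) = f (toII r a) := by
  simp [uvq, uv, Finsupp.lift_apply, Finsupp.sum_single_index]

end Basis

section Operators

lemma qq_ne_zero : qq ≠ 0 := by
  rw [qq, ne_eq, IsFractionRing.to_map_eq_zero_iff]
  exact MvPolynomial.X_ne_zero 1

variable {r : ℕ} {k : ℤ}

lemma E1_uvq (i : ℚ) (h1 : -(r : ℤ) ≤ k) (h2 : k ≤ r) :
    E1 r i (uvq r k) = if (k : ℚ) = i + 1/2 then uvq r (i - 1/2) else 0 := by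
  rw [E1, lift_uvq, toII_val_intCast h1 h2]

lemma F1_uvq (i : ℚ) (h1 : -(r : ℤ) ≤ k) (h2 : k ≤ r) :
    F1 r i (uvq r k) = if (k : ℚ) = i - 1/2 then uvq r (i + 1/2) else 0 := by
  rw [F1, lift_uvq, toII_val_intCast h1 h2]

lemma K1_uvq (i : ℚ) (h1 : -(r : ℤ) ≤ k) (h2 : k ≤ r) :
    K1 r i (uvq r k) = qq ^ kexp i k • uvq r k := by
  rw [K1, lift_uvq, toII_val_intCast h1 h2]
  rfl

lemma K1inv_uvq (i : ℚ) (h1 : -(r : ℤ) ≤ k) (h2 : k ≤ r) :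
    K1inv r i (uvq r k) = qq ^ (-kexp i k) • uvq r k := by
  rw [K1inv, lift_uvq, toII_val_intCast h1 h2]
  rfl

lemma kexp_eq_zero {i a : ℚ} (h1 : a ≠ i - 1/2) (h2 : a ≠ i + 1/2) : kexp i a = 0 := by
  rw [kexp, if_neg h1, if_neg h2, sub_zero]

lemma kexp_sub_kexp_neg_neg (i a : ℚ) :
    kexp i (-a) - kexp (-i) (-a) = kexp i a - kexp (-i) a := by
  simp only [kexp, neg_eq_iff_eq_neg, neg_sub, neg_add, neg_neg]
  ring_nf

lemma e1_uvq (m : ℕ) (h1 : -(r : ℤ) ≤ k) (h2 : k ≤ r) :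
    e1 r (m + 1/2) (uvq r k) =
      (if k = m + 1 then uvq r m else 0) +
        if k = -(m + 1) then pp ^ (-(if (m : ℚ) + 1/2 = 1/2 then (1 : ℤ) else 0)) • uvq r (-m)
        else 0 := by
  rw [e1, LinearMap.add_apply, LinearMap.smul_apply, Module.End.mul_apply, E1_uvq _ h1 h2,
    K1inv_uvq _ h1 h2, map_smul, F1_uvq _ h1 h2]
  have hup : ((m : ℚ) + 1/2) + 1/2 = ((m + 1 : ℤ) : ℚ) := by push_cast; ring
  have hdown : -((m : ℚ) + 1/2) - 1/2 = ((-(m + 1) : ℤ) : ℚ) := by push_cast; ring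
  simp only [hup, hdown, Int.cast_inj, add_sub_cancel_right]
  by_cases hk : k = -(m + 1)
  · have hm : (0 : ℚ) ≤ m := m.cast_nonneg
    have hkexp : kexp ((m : ℚ) + 1/2) k = 0 := by
      apply kexp_eq_zero <;> (rw [hk]; push_cast; intro h; linarith)
    rw [if_neg (by omega), if_pos hk, if_pos hk, hkexp, neg_zero, zpow_zero, one_smul,
      show -((m : ℚ) + 1/2) + 1/2 = -m by ring]
  · rw [if_neg hk, if_neg hk, smul_zero, smul_zero, add_zero]

lemma f1_uvq {m : ℕ} (hm : m + 1 ≤ r) (h1 : -(r : ℤ) ≤ k) (h2 : k ≤ r) :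
    f1 r (m + 1/2) (uvq r k) =
      (if k = -m then uvq r (-m - 1) else 0) +
        if k = m then pp ^ (if (m : ℚ) + 1/2 = 1/2 then (1 : ℤ) else 0) • uvq r (m + 1)
        else 0 := by
  rw [f1, LinearMap.add_apply, LinearMap.smul_apply, Module.End.mul_apply, E1_uvq _ h1 h2,
    F1_uvq _ h1 h2]
  have hdown : -((m : ℚ) + 1/2) + 1/2 = ((-m : ℤ) : ℚ) := by push_cast; ring
  have hup : (m : ℚ) + 1/2 - 1/2 = ((m : ℤ) : ℚ) := by push_cast; ring
  have hfar : (m : ℚ) + 1/2 + 1/2 = ((m + 1 : ℤ) : ℚ) := by push_cast; ring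
  simp only [hup, hdown, Int.cast_inj, hfar, show -((m : ℚ) + 1/2) - 1/2 = -m - 1 by ring]
  by_cases hk : k = m
  · have hm' : (0 : ℚ) ≤ m := m.cast_nonneg
    have hkexp : kexp (-((m : ℚ) + 1/2)) ((m + 1 : ℤ) : ℚ) = 0 := by
      apply kexp_eq_zero <;> (push_cast; intro h; linarith)
    simp only [if_pos hk]
    rw [K1inv_uvq _ (by omega) (by omega), hkexp, neg_zero, zpow_zero, one_smul]
    push_cast
    rfl
  · simp only [if_neg hk, map_zero, smul_zero, add_zero]

lemma k1_uvq (i : ℚ) (h1 : -(r : ℤ) ≤ k) (h2 : k ≤ r) :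
    k1 r i (uvq r k) = qq ^ (kexp i k - kexp (-i) k) • uvq r k := by
  rw [k1, Module.End.mul_apply, K1inv_uvq _ h1 h2, map_smul, K1_uvq _ h1 h2, smul_smul,
    ← zpow_add₀ qq_ne_zero, neg_add_eq_sub]

lemma k1inv_uvq (i : ℚ) (h1 : -(r : ℤ) ≤ k) (h2 : k ≤ r) :
    k1inv r i (uvq r k) = qq ^ (-(kexp i k - kexp (-i) k)) • uvq r k := by
  rw [k1inv, Module.End.mul_apply, K1_uvq _ h1 h2, map_smul, K1inv_uvq _ h1 h2, smul_smul,
    ← zpow_add₀ qq_ne_zero]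
  congr 2
  ring

end Operators

def wvec (r n : ℕ) (c : K2) : V1 r := uvq r (-(n : ℚ)) + c • uvq r n

section PairVectors

variable {r n : ℕ} {i : ℚ}

lemma wplus_eq_wvec : wplus r n = wvec r n pp := rfl

lemma wminus_eq_wvec : wminus r n = wvec r n (-pp⁻¹) := by
  rw [wminus, wvec, neg_smul, sub_eq_add_neg]

lemma wvec_eq_intCast (c : K2) :
    wvec r n c = uvq r ((-n : ℤ) : ℚ) + c • uvq r ((n : ℤ) : ℚ) := by
  push_cast
  rfl

lemma f1_wvec (hi : i ∈ Ijset r) (hn1 : 1 ≤ n) (hn : n ≤ r) (c : K2) :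
    f1 r i (wvec r n c) =
      if i = n + 1/2 then uvq r (-(n : ℚ) - 1) + c • uvq r ((n : ℚ) + 1) else 0 := by
  obtain ⟨m, hm, rfl⟩ := hi
  rw [wvec_eq_intCast, map_add, map_smul, f1_uvq hm (by omega) (by omega),
    f1_uvq hm (by omega) (by omega)]
  simp only [add_left_inj, Nat.cast_inj, add_eq_right, Nat.cast_eq_zero]
  rcases eq_or_ne m n with rfl | h <;>
    simp (disch := omega) only [if_pos, if_neg, if_true, zpow_zero, one_smul, smul_zero,
      add_zero, zero_add]

lemma e1_wvec (hi : i ∈ Ijset r) (hn1 : 1 ≤ n) (hn : n ≤ r) (c : K2) :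
    e1 r i (wvec r n c) =
      if i = n - 1/2 then
        pp ^ (-(if i = 1/2 then (1 : ℤ) else 0)) • uvq r (-(n : ℚ) + 1)
          + c • uvq r ((n : ℚ) - 1)
      else 0 := by
  obtain ⟨m, -, rfl⟩ := hi
  rw [wvec_eq_intCast, map_add, map_smul, e1_uvq m (by omega) (by omega),
    e1_uvq m (by omega) (by omega)]
  rcases eq_or_ne n (m + 1) with rfl | h
  · rw [if_pos (show (m : ℚ) + 1/2 = ((m + 1 : ℕ) : ℚ) - 1/2 by push_cast; ring),
      show -((m + 1 : ℕ) : ℚ) + 1 = -m by push_cast; ring,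
      show ((m + 1 : ℕ) : ℚ) - 1 = m by push_cast; ring]
    simp (disch := omega) only [if_pos, if_neg, zero_add, add_zero]
  · have hcond : (m : ℚ) + 1/2 ≠ n - 1/2 := fun h' =>
      h (by exact_mod_cast (by linarith : (n : ℚ) = m + 1))
    rw [if_neg hcond]
    simp (disch := omega) only [if_neg, smul_zero, add_zero]

lemma k1_wvec (i : ℚ) (hn : n ≤ r) (c : K2) :
    k1 r i (wvec r n c) = qq ^ (kexp i n - kexp (-i) n) • wvec r n c := by
  rw [wvec_eq_intCast, map_add, map_smul, k1_uvq i (by omega) (by omega),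
    k1_uvq i (by omega) (by omega)]
  push_cast
  rw [kexp_sub_kexp_neg_neg, smul_add, smul_comm]

lemma k1inv_wvec (i : ℚ) (hn : n ≤ r) (c : K2) :
    k1inv r i (wvec r n c) = qq ^ (-(kexp i n - kexp (-i) n)) • wvec r n c := by
  rw [wvec_eq_intCast, map_add, map_smul, k1inv_uvq i (by omega) (by omega),
    k1inv_uvq i (by omega) (by omega)]
  push_cast
  rw [kexp_sub_kexp_neg_neg, smul_add, smul_comm]

lemma f1_uvq_zero (hi : i ∈ Ijset r) :
    f1 r i (uvq r 0) = if i = 1/2 then uvq r (-1) + pp • uvq r 1 else 0 := by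
  obtain ⟨m, hm, rfl⟩ := hi
  rw [← Int.cast_zero, f1_uvq hm (by omega) (by omega)]
  simp only [add_eq_right, Nat.cast_eq_zero]
  rcases eq_or_ne m 0 with rfl | h
  · norm_num
  · simp (disch := omega) only [if_neg, add_zero]

lemma e1_uvq_zero (hi : i ∈ Ijset r) : e1 r i (uvq r 0) = 0 := by
  obtain ⟨m, -, rfl⟩ := hi
  rw [← Int.cast_zero, e1_uvq m (by omega) (by omega)]
  simp (disch := omega) only [if_neg, add_zero]

end PairVectors

section Invariance

variable {r n : ℕ} {i : ℚ}

lemma e1_wvec_cases (hi : i ∈ Ijset r) (hn1 : 1 ≤ n) (hn : n ≤ r) (c : K2) :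
    e1 r i (wvec r n c) = 0 ∨ e1 r i (wvec r n c) = (pp⁻¹ + c) • uvq r 0 ∨
      ∃ m, 1 ≤ m ∧ m ≤ r ∧ e1 r i (wvec r n c) = wvec r m c := by
  rw [e1_wvec hi hn1 hn c]
  obtain ⟨m, -, rfl⟩ := hi
  by_cases h : (m : ℚ) + 1/2 = n - 1/2
  · rw [if_pos h]
    obtain rfl : n = m + 1 := by exact_mod_cast (by linarith : (n : ℚ) = m + 1)
    rw [show -((m + 1 : ℕ) : ℚ) + 1 = -m by push_cast; ring,
      show ((m + 1 : ℕ) : ℚ) - 1 = m by push_cast; ring]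
    rcases eq_or_ne m 0 with rfl | hm
    · norm_num [add_smul]
    · refine Or.inr (Or.inr ⟨m, by omega, by omega, ?_⟩)
      simp [wvec, hm]
  · exact Or.inl (if_neg h)

lemma f1_wvec_cases (hi : i ∈ Ijset r) (hn1 : 1 ≤ n) (hn : n ≤ r) (c : K2) :
    f1 r i (wvec r n c) = 0 ∨ n + 1 ≤ r ∧ f1 r i (wvec r n c) = wvec r (n + 1) c := by
  rw [f1_wvec hi hn1 hn c]
  split_ifs with h
  · obtain ⟨m, hm, rfl⟩ := hi
    obtain rfl : m = n := by exact_mod_cast (by linarith : (m : ℚ) = n)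
    refine Or.inr ⟨hm, ?_⟩
    rw [wvec]
    push_cast
    ring_nf
  · exact Or.inl rfl

lemma uvq_zero_mem_VplusO : uvq r 0 ∈ VplusO r :=
  Submodule.subset_span (Or.inl rfl)

lemma wvec_mem_VplusO (hn1 : 1 ≤ n) (hn : n ≤ r) : wvec r n pp ∈ VplusO r :=
  Submodule.subset_span (Or.inr ⟨n, hn1, hn, rfl⟩)

lemma wvec_mem_VminusO (hn1 : 1 ≤ n) (hn : n ≤ r) : wvec r n (-pp⁻¹) ∈ VminusO r :=
  Submodule.subset_span ⟨n, hn1, hn, wminus_eq_wvec.symm⟩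

lemma VplusO_le_comap (T : Module.End K2 (V1 r)) (h0 : T (uvq r 0) ∈ VplusO r)
    (hw : ∀ n, 1 ≤ n → n ≤ r → T (wvec r n pp) ∈ VplusO r) :
    VplusO r ≤ (VplusO r).comap T :=
  Submodule.span_le.2 <| by
    rintro _ (rfl | ⟨n, hn1, hn, rfl⟩)
    exacts [h0, hw n hn1 hn]

lemma VminusO_le_comap (T : Module.End K2 (V1 r))
    (hw : ∀ n, 1 ≤ n → n ≤ r → T (wvec r n (-pp⁻¹)) ∈ VminusO r) :
    VminusO r ≤ (VminusO r).comap T :=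
  Submodule.span_le.2 <| by
    rintro _ ⟨n, hn1, hn, rfl⟩
    rw [wminus_eq_wvec]
    exact hw n hn1 hn

lemma VplusO_le_comap_e1 (hi : i ∈ Ijset r) : VplusO r ≤ (VplusO r).comap (e1 r i) := by
  refine VplusO_le_comap _ (by rw [e1_uvq_zero hi]; exact zero_mem _) fun n hn1 hn => ?_
  rcases e1_wvec_cases hi hn1 hn pp with h | h | ⟨m, hm1, hm, h⟩ <;> rw [h]
  exacts [zero_mem _, Submodule.smul_mem _ _ uvq_zero_mem_VplusO, wvec_mem_VplusO hm1 hm]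

lemma VminusO_le_comap_e1 (hi : i ∈ Ijset r) : VminusO r ≤ (VminusO r).comap (e1 r i) := by
  refine VminusO_le_comap _ fun n hn1 hn => ?_
  rcases e1_wvec_cases hi hn1 hn (-pp⁻¹) with h | h | ⟨m, hm1, hm, h⟩ <;> rw [h]
  exacts [zero_mem _, by rw [add_neg_cancel, zero_smul]; exact zero_mem _,
    wvec_mem_VminusO hm1 hm]

lemma VplusO_le_comap_f1 (hi : i ∈ Ijset r) : VplusO r ≤ (VplusO r).comap (f1 r i) := by
  refine VplusO_le_comap _ ?_ fun n hn1 hn => ?_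
  · rw [f1_uvq_zero hi]
    obtain ⟨m, hm, -⟩ := hi
    split_ifs
    · simpa [wvec] using wvec_mem_VplusO (r := r) le_rfl (by omega)
    · exact zero_mem _
  · rcases f1_wvec_cases hi hn1 hn pp with h | ⟨hn', h⟩ <;> rw [h]
    exacts [zero_mem _, wvec_mem_VplusO (by omega) hn']

lemma VminusO_le_comap_f1 (hi : i ∈ Ijset r) : VminusO r ≤ (VminusO r).comap (f1 r i) := by
  refine VminusO_le_comap _ fun n hn1 hn => ?_
  rcases f1_wvec_cases hi hn1 hn (-pp⁻¹) with h | ⟨hn', h⟩ <;> rw [h]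
  exacts [zero_mem _, wvec_mem_VminusO (by omega) hn']

lemma VplusO_le_comap_k1 (i : ℚ) : VplusO r ≤ (VplusO r).comap (k1 r i) := by
  refine VplusO_le_comap _ ?_ fun n _ hn => ?_
  · rw [← Int.cast_zero, k1_uvq i (by omega) (by omega), Int.cast_zero]
    exact Submodule.smul_mem _ _ uvq_zero_mem_VplusO
  · rw [k1_wvec i hn]
    exact Submodule.smul_mem _ _ (wvec_mem_VplusO (by omega) hn)

lemma VplusO_le_comap_k1inv (i : ℚ) : VplusO r ≤ (VplusO r).comap (k1inv r i) := by
  refine VplusO_le_comap _ ?_ fun n _ hn => ?_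
  · rw [← Int.cast_zero, k1inv_uvq i (by omega) (by omega), Int.cast_zero]
    exact Submodule.smul_mem _ _ uvq_zero_mem_VplusO
  · rw [k1inv_wvec i hn]
    exact Submodule.smul_mem _ _ (wvec_mem_VplusO (by omega) hn)

lemma VminusO_le_comap_k1 (i : ℚ) : VminusO r ≤ (VminusO r).comap (k1 r i) :=
  VminusO_le_comap _ fun n hn1 hn => by
    rw [k1_wvec i hn]
    exact Submodule.smul_mem _ _ (wvec_mem_VminusO hn1 hn)

lemma VminusO_le_comap_k1inv (i : ℚ) : VminusO r ≤ (VminusO r).comap (k1inv r i) :=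
  VminusO_le_comap _ fun n hn1 hn => by
    rw [k1inv_wvec i hn]
    exact Submodule.smul_mem _ _ (wvec_mem_VminusO hn1 hn)

end Invariance

section DirectSum

variable {r n k : ℕ}

lemma pp_add_inv_ne_zero : pp + pp⁻¹ ≠ 0 := by
  have hp : pp ≠ 0 := by
    rw [pp, ne_eq, IsFractionRing.to_map_eq_zero_iff]
    exact MvPolynomial.X_ne_zero 0
  have hsq : pp ^ 2 + 1 ≠ 0 := by
    rw [pp, ← map_pow, ← map_one (algebraMap (MvPolynomial (Fin 2) ℚ) K2), ← map_add, ne_eq,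
      IsFractionRing.to_map_eq_zero_iff]
    intro h
    simpa using congrArg (MvPolynomial.eval 0) h
  intro h
  apply hsq
  field_simp at h
  linear_combination h

lemma wvec_apply (c : K2) (hk : k ≤ r) {j : ℤ} (hj1 : -(r : ℤ) ≤ j) (hj : j ≤ r) :
    wvec r k c (toII r j) =
      (if -(k : ℤ) = j then 1 else 0) + c * if (k : ℤ) = j then 1 else 0 := by
  rw [wvec_eq_intCast, Finsupp.add_apply, Finsupp.smul_apply, smul_eq_mul,
    uvq_intCast_apply (by omega) (by omega) hj1 hj, uvq_intCast_apply (by omega) (by omega) hj1 hj]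

lemma toII_natCast : toII r (n : ℚ) = toII r ((n : ℤ) : ℚ) := by
  rw [Int.cast_natCast]

lemma toII_neg_natCast : toII r (-(n : ℚ)) = toII r ((-n : ℤ) : ℚ) := by
  push_cast
  rfl

lemma wvec_apply_natCast (c : K2) (hk1 : 1 ≤ k) (hk : k ≤ r) (hn1 : 1 ≤ n) (hn : n ≤ r) :
    wvec r k c (toII r n) = c * wvec r k c (toII r (-n)) := by
  rw [toII_natCast, toII_neg_natCast, wvec_apply c hk (by omega) (by omega),
    wvec_apply c hk (by omega) (by omega)]
  rcases eq_or_ne k n with rfl | h <;> simp (disch := omega) only [if_neg] <;> ring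

lemma wvec_apply_zero (c : K2) (hk1 : 1 ≤ k) (hk : k ≤ r) : wvec r k c (toII r 0) = 0 := by
  rw [← Int.cast_zero, wvec_apply c hk (by omega) (by omega)]
  simp (disch := omega) only [if_neg, mul_zero, add_zero]

lemma uvq_zero_apply_natCast (hn1 : 1 ≤ n) (hn : n ≤ r) :
    uvq r 0 (toII r n) = pp * uvq r 0 (toII r (-n)) := by
  rw [toII_natCast, toII_neg_natCast, ← Int.cast_zero,
    uvq_intCast_apply (by omega) (by omega) (by omega) (by omega),
    uvq_intCast_apply (by omega) (by omega) (by omega) (by omega)]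
  simp (disch := omega) only [if_neg, mul_zero]

lemma VplusO_apply_natCast (hn1 : 1 ≤ n) (hn : n ≤ r) {x : V1 r} (hx : x ∈ VplusO r) :
    x (toII r n) = pp * x (toII r (-n)) := by
  let φ : V1 r →ₗ[K2] K2 := Finsupp.lapply (toII r n) - pp • Finsupp.lapply (toII r (-n))
  suffices VplusO r ≤ LinearMap.ker φ from sub_eq_zero.1 (this hx)
  refine Submodule.span_le.2 fun y hy => sub_eq_zero.2 ?_
  rcases hy with rfl | ⟨k, hk1, hk, rfl⟩
  exacts [uvq_zero_apply_natCast hn1 hn, wvec_apply_natCast pp hk1 hk hn1 hn]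

lemma VminusO_apply_natCast (hn1 : 1 ≤ n) (hn : n ≤ r) {x : V1 r} (hx : x ∈ VminusO r) :
    x (toII r n) = -pp⁻¹ * x (toII r (-n)) := by
  let φ : V1 r →ₗ[K2] K2 :=
    Finsupp.lapply (toII r n) - (-pp⁻¹) • Finsupp.lapply (toII r (-n))
  suffices VminusO r ≤ LinearMap.ker φ from sub_eq_zero.1 (this hx)
  refine Submodule.span_le.2 fun y hy => sub_eq_zero.2 ?_
  obtain ⟨k, hk1, hk, rfl⟩ := hy
  rw [wminus_eq_wvec]
  exact wvec_apply_natCast _ hk1 hk hn1 hn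

lemma VminusO_apply_zero {x : V1 r} (hx : x ∈ VminusO r) : x (toII r 0) = 0 := by
  suffices VminusO r ≤ LinearMap.ker (Finsupp.lapply (toII r 0)) from this hx
  refine Submodule.span_le.2 fun y hy => ?_
  obtain ⟨k, hk1, hk, rfl⟩ := hy
  rw [SetLike.mem_coe, LinearMap.mem_ker, Finsupp.lapply_apply, wminus_eq_wvec]
  exact wvec_apply_zero _ hk1 hk

lemma VplusO_inf_VminusO : VplusO r ⊓ VminusO r = ⊥ := by
  refine eq_bot_iff.2 fun x ⟨hxp, hxm⟩ => (Submodule.mem_bot K2).2 (Finsupp.ext fun a => ?_)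
  have hneg : ∀ n, 1 ≤ n → n ≤ r → x (toII r (-n)) = 0 := fun n hn1 hn => by
    have hp := VplusO_apply_natCast hn1 hn hxp
    have hm := VminusO_apply_natCast hn1 hn hxm
    have h : (pp + pp⁻¹) * x (toII r (-n)) = 0 := by linear_combination hm - hp
    exact (mul_eq_zero.1 h).resolve_left pp_add_inv_ne_zero
  rcases IIdx.eq_zero_or_eq_pm a with rfl | ⟨n, hn1, hn, rfl | rfl⟩
  · exact VminusO_apply_zero hxm
  · rw [VplusO_apply_natCast hn1 hn hxp, hneg n hn1 hn, mul_zero, Finsupp.coe_zero, Pi.zero_apply]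
  · exact hneg n hn1 hn

lemma VplusO_sup_VminusO : VplusO r ⊔ VminusO r = ⊤ := by
  have hpos : ∀ n, 1 ≤ n → n ≤ r → uvq r n ∈ VplusO r ⊔ VminusO r := by
    intro n hn1 hn
    have h : uvq r n = (pp + pp⁻¹)⁻¹ • (wvec r n pp - wvec r n (-pp⁻¹)) := by
      rw [wvec, wvec, add_sub_add_left_eq_sub, ← sub_smul, sub_neg_eq_add, smul_smul,
        inv_mul_cancel₀ pp_add_inv_ne_zero, one_smul]
    rw [h]
    exact Submodule.smul_mem _ _ (Submodule.sub_mem _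
      (Submodule.mem_sup_left (wvec_mem_VplusO hn1 hn))
      (Submodule.mem_sup_right (wvec_mem_VminusO hn1 hn)))
  rw [eq_top_iff, ← Finsupp.basisSingleOne.span_eq, Submodule.span_le]
  rintro _ ⟨a, rfl⟩
  rw [SetLike.mem_coe, Finsupp.coe_basisSingleOne]
  rcases IIdx.eq_zero_or_eq_pm a with rfl | ⟨n, hn1, hn, rfl | rfl⟩
  · exact Submodule.mem_sup_left uvq_zero_mem_VplusO
  · exact hpos n hn1 hn
  · have h : uvq r (-n) = wvec r n pp - pp • uvq r n := by rw [wvec, add_sub_cancel_right]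
    change uvq r (-n) ∈ _
    rw [h]
    exact Submodule.sub_mem _ (Submodule.mem_sup_left (wvec_mem_VplusO hn1 hn))
      (Submodule.smul_mem _ _ (hpos n hn1 hn))

end DirectSum

/-- explicit action of the coideal operators on `u_0` and `w_n^±`, and the
resulting decomposition `V = V⁺ ⊕ V⁻` into invariant submodules (odd case). -/
theorem coideal_action_on_w_odd (r : ℕ) (hr : 1 ≤ r) :
    f1 r (1/2) (uvq r 0) = uvq r (-1) + pp • uvq r 1 ∧
    (∀ i ∈ Ijset r, ∀ n : ℕ, 1 ≤ n → n ≤ r →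
      f1 r i (wplus r n)
        = (if i = (n : ℚ) + 1/2 then uvq r (-(n : ℚ) - 1) + pp • uvq r ((n : ℚ) + 1) else 0) ∧
      e1 r i (wplus r n)
        = (if i = (n : ℚ) - 1/2 then
            (pp ^ (-(if i = 1/2 then (1:ℤ) else 0))) • uvq r (-(n : ℚ) + 1)
              + pp • uvq r ((n : ℚ) - 1)
          else 0) ∧
      f1 r i (wminus r n)
        = (if i = (n : ℚ) + 1/2 then uvq r (-(n : ℚ) - 1) - pp⁻¹ • uvq r ((n : ℚ) + 1) else 0) ∧
      e1 r i (wminus r n)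
        = (if i = (n : ℚ) - 1/2 then
            (pp ^ (-(if i = 1/2 then (1:ℤ) else 0))) • uvq r (-(n : ℚ) + 1)
              - pp⁻¹ • uvq r ((n : ℚ) - 1)
          else 0)) ∧
    (∀ x ∈ VplusO r, ∀ i ∈ Ijset r,
      e1 r i x ∈ VplusO r ∧ f1 r i x ∈ VplusO r ∧ k1 r i x ∈ VplusO r ∧ k1inv r i x ∈ VplusO r) ∧
    (∀ x ∈ VminusO r, ∀ i ∈ Ijset r,
      e1 r i x ∈ VminusO r ∧ f1 r i x ∈ VminusO r ∧ k1 r i x ∈ VminusO r ∧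
        k1inv r i x ∈ VminusO r) ∧
    VplusO r ⊓ VminusO r = ⊥ ∧ VplusO r ⊔ VminusO r = ⊤ := by
  have hhalf : (1/2 : ℚ) ∈ Ijset r := ⟨0, by omega, by norm_num⟩
  refine ⟨(f1_uvq_zero hhalf).trans (if_pos rfl), fun i hi n hn1 hn => ?_,
    fun x hx i hi => ⟨VplusO_le_comap_e1 hi hx, VplusO_le_comap_f1 hi hx,
      VplusO_le_comap_k1 i hx, VplusO_le_comap_k1inv i hx⟩,
    fun x hx i hi => ⟨VminusO_le_comap_e1 hi hx, VminusO_le_comap_f1 hi hx,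
      VminusO_le_comap_k1 i hx, VminusO_le_comap_k1inv i hx⟩,
    VplusO_inf_VminusO, VplusO_sup_VminusO⟩
  rw [wplus_eq_wvec, wminus_eq_wvec, f1_wvec hi hn1 hn, e1_wvec hi hn1 hn, f1_wvec hi hn1 hn,
    e1_wvec hi hn1 hn]
  simp only [neg_smul, ← sub_eq_add_neg, and_self]
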